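/- arXiv:1101.2619 — 2 statements merged into one kernel-verified Lean document; each statement's English description precedes it below -/
import Mathlib

section
/- For every real x > 0, min( 4·0.61·x²/(7 + 0.61·x²)² , 4·0.61·x²/((x+1)² + 0.61·x²)² ) ≤ 1/11.3. Moreover, the maximum of this minimum over x > 0 is attained at x = √7 − 1, where the two expressions are equal. -/
set_option maxHeartbeats 1000000


theorem centre_min_bound :
    (∀ x : ℝ, 0 < x →
      min (4 * 0.61 * x ^ 2 / (7 + 0.61 * x ^ 2) ^ 2)
          (4 * 0.61 * x ^ 2 / ((x + 1) ^ 2 + 0.61 * x ^ 2) ^ 2) ≤ 1 / 11.3) ∧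
    (4 * 0.61 * (Real.sqrt 7 - 1) ^ 2 / (7 + 0.61 * (Real.sqrt 7 - 1) ^ 2) ^ 2 =
      4 * 0.61 * (Real.sqrt 7 - 1) ^ 2 /
        (((Real.sqrt 7 - 1) + 1) ^ 2 + 0.61 * (Real.sqrt 7 - 1) ^ 2) ^ 2) ∧
    (∀ x : ℝ, 0 < x →
      min (4 * 0.61 * x ^ 2 / (7 + 0.61 * x ^ 2) ^ 2)
          (4 * 0.61 * x ^ 2 / ((x + 1) ^ 2 + 0.61 * x ^ 2) ^ 2) ≤
        min (4 * 0.61 * (Real.sqrt 7 - 1) ^ 2 / (7 + 0.61 * (Real.sqrt 7 - 1) ^ 2) ^ 2)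
          (4 * 0.61 * (Real.sqrt 7 - 1) ^ 2 /
            (((Real.sqrt 7 - 1) + 1) ^ 2 + 0.61 * (Real.sqrt 7 - 1) ^ 2) ^ 2)) := by
  set s := Real.sqrt 7 with hsdef
  have hs : s ^ 2 = 7 := Real.sq_sqrt (by norm_num)
  have hsnn : (0:ℝ) ≤ s := Real.sqrt_nonneg 7
  have hslb : (2.64575:ℝ) < s := by nlinarith
  have hsub : s < (2.645752:ℝ) := by nlinarith
  have hx0 : (0:ℝ) < s - 1 := by linarith
  have heq : (4 * 0.61 * (s - 1) ^ 2 / (7 + 0.61 * (s - 1) ^ 2) ^ 2 =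
      4 * 0.61 * (s - 1) ^ 2 / (((s - 1) + 1) ^ 2 + 0.61 * (s - 1) ^ 2) ^ 2) := by
    rw [show (s - 1) + 1 = s by ring, hs]
  have hmain : ∀ x : ℝ, 0 < x →
      min (4 * 0.61 * x ^ 2 / (7 + 0.61 * x ^ 2) ^ 2)
          (4 * 0.61 * x ^ 2 / ((x + 1) ^ 2 + 0.61 * x ^ 2) ^ 2) ≤
        min (4 * 0.61 * (s - 1) ^ 2 / (7 + 0.61 * (s - 1) ^ 2) ^ 2)
          (4 * 0.61 * (s - 1) ^ 2 / (((s - 1) + 1) ^ 2 + 0.61 * (s - 1) ^ 2) ^ 2) := by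
    intro x hx
    rw [← heq, min_self]
    rcases le_total x (s - 1) with h | h
    · refine le_trans (min_le_left _ _) ?_
      rw [div_le_div_iff₀ (by positivity) (by positivity)]
      have h1 : 0 ≤ (s - 1) - x := by linarith
      have h2 : 0 ≤ 7 - 0.61 * x * (s - 1) := by nlinarith
      have key : x * (7 + 0.61 * (s - 1) ^ 2) ≤ (s - 1) * (7 + 0.61 * x ^ 2) := by
        nlinarith [mul_nonneg h1 h2]
      have hA : 0 ≤ x * (7 + 0.61 * (s - 1) ^ 2) := by positivity
      have := mul_le_mul key key hA (by positivity)
      nlinarith [this]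
    · rw [heq]
      refine le_trans (min_le_right _ _) ?_
      rw [div_le_div_iff₀ (by positivity) (by positivity)]
      have h1 : 0 ≤ x - (s - 1) := by linarith
      have h2 : 0 ≤ 1.61 * x * (s - 1) - 1 := by nlinarith
      have key : x * (((s - 1) + 1) ^ 2 + 0.61 * (s - 1) ^ 2) ≤
          (s - 1) * ((x + 1) ^ 2 + 0.61 * x ^ 2) := by
        nlinarith [mul_nonneg h1 h2]
      have hA : 0 ≤ x * (((s - 1) + 1) ^ 2 + 0.61 * (s - 1) ^ 2) := by positivity
      have := mul_le_mul key key hA (by positivity)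
      nlinarith [this]
  refine ⟨?_, heq, hmain⟩
  intro x hx
  refine le_trans (hmain x hx) ?_
  rw [← heq, min_self, div_le_div_iff₀ (by positivity) (by norm_num)]
  nlinarith
end

section
/- For every real x > 0, min( 4·0.61·x²/(5 + 0.61·x²)² , 4·0.61·x²/((1 + x/√2)² + 0.61·x²)² ) ≤ 1/6.3, and the two expressions are equal when x = √2·(√5 − 1). -/
/-!
Write `x₀ = √2 (√5 - 1)` for the crossing point, where `1 + x₀/√2 = √5`, so that the two
bounds agree. Both have the shape `u / (A + u)²`, which increases on `[0, A]`: the sector bound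
(with `u = 0.61 x²`, `A = 5`) is therefore at most its value at `x₀` for `x ≤ x₀`, and, with
`s = x/√2`, the neighbourhood bound is a multiple of `(s / ((1 + s)² + 1.22 s²))²`, which
decreases once `2.22 s² ≥ 1`, so it is at most its value at `x₀` for `x ≥ x₀`. The common value
at `x₀` is `4u₀/(5 + u₀)²` with `u₀ = 0.61 (12 - 4√5) < 1.865`, below `1/6.3`.
-/

open Real

lemma div_add_sq_le_div_add_sq {A u v : ℝ} (hA : 0 < A) (hu : 0 ≤ u) (huv : u ≤ v)
    (huvA : u * v ≤ A ^ 2) : u / (A + u) ^ 2 ≤ v / (A + v) ^ 2 := by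
  have hv : 0 ≤ v := hu.trans huv
  rw [div_le_div_iff₀ (by positivity) (by positivity)]
  nlinarith [mul_nonneg (sub_nonneg.2 huv) (sub_nonneg.2 huvA)]

lemma div_one_add_sq_add_le {k s t : ℝ} (hk : 0 ≤ k) (ht : 0 < t) (hts : t ≤ s)
    (hst : 1 ≤ (1 + k) * t * s) :
    s / ((1 + s) ^ 2 + k * s ^ 2) ≤ t / ((1 + t) ^ 2 + k * t ^ 2) := by
  have hs : 0 < s := ht.trans_le hts
  rw [div_le_div_iff₀ (by positivity) (by positivity)]
  nlinarith [mul_nonneg (sub_nonneg.2 hts) (sub_nonneg.2 hst)]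

lemma lt_sqrt_five : 2.236 < √5 :=
  (lt_sqrt (by norm_num)).2 (by norm_num)

noncomputable def sectorBound (x : ℝ) : ℝ := 4 * 0.61 * x ^ 2 / (5 + 0.61 * x ^ 2) ^ 2

noncomputable def neighbourhoodBound (x : ℝ) : ℝ :=
  4 * 0.61 * x ^ 2 / ((1 + x / √2) ^ 2 + 0.61 * x ^ 2) ^ 2

noncomputable def crossingPoint : ℝ := √2 * (√5 - 1)

lemma one_add_crossingPoint_div_sqrt_two : 1 + crossingPoint / √2 = √5 := by
  rw [crossingPoint, mul_div_cancel_left₀ _ (by positivity)]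
  ring

lemma sq_crossingPoint : crossingPoint ^ 2 = 12 - 4 * √5 := by
  rw [crossingPoint, mul_pow, sq_sqrt (by norm_num)]
  nlinarith [sq_sqrt (show (0 : ℝ) ≤ 5 by norm_num)]

lemma sectorBound_crossingPoint_eq_neighbourhoodBound :
    sectorBound crossingPoint = neighbourhoodBound crossingPoint := by
  rw [sectorBound, neighbourhoodBound, one_add_crossingPoint_div_sqrt_two, sq_sqrt (by norm_num)]

lemma sectorBound_le_sectorBound_crossingPoint {x : ℝ} (hx : 0 < x) (h : x ≤ crossingPoint) :
    sectorBound x ≤ sectorBound crossingPoint := by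
  have hx₀ : 0.61 * crossingPoint ^ 2 ≤ 5 := by
    rw [sq_crossingPoint]; linarith [lt_sqrt_five]
  have hxx₀ : 0.61 * x ^ 2 ≤ 0.61 * crossingPoint ^ 2 := by gcongr
  have key := div_add_sq_le_div_add_sq (A := 5) (by norm_num) (by positivity) hxx₀
    (by nlinarith [mul_le_mul hxx₀ hx₀ (by positivity) (by positivity)])
  rw [sectorBound, sectorBound, mul_assoc (4 : ℝ), mul_div_assoc (4 : ℝ), mul_assoc (4 : ℝ),
    mul_div_assoc (4 : ℝ)]
  gcongr

lemma sectorBound_crossingPoint_le : sectorBound crossingPoint ≤ 1 / 6.3 := by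
  have hu : 0.61 * crossingPoint ^ 2 ≤ 1.865 := by
    rw [sq_crossingPoint]; linarith [lt_sqrt_five]
  have key := div_add_sq_le_div_add_sq (A := 5) (by norm_num) (by positivity) hu (by nlinarith)
  calc sectorBound crossingPoint
      = 4 * (0.61 * crossingPoint ^ 2 / (5 + 0.61 * crossingPoint ^ 2) ^ 2) := by
        rw [sectorBound]; ring
    _ ≤ 4 * (1.865 / (5 + 1.865) ^ 2) := by gcongr
    _ ≤ 1 / 6.3 := by norm_num

lemma neighbourhoodBound_eq (x : ℝ) :
    neighbourhoodBound x =
      8 * 0.61 * (x / √2 / ((1 + x / √2) ^ 2 + 2 * 0.61 * (x / √2) ^ 2)) ^ 2 := by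
  have hx : x ^ 2 = 2 * (x / √2) ^ 2 := by
    rw [div_pow, sq_sqrt (by norm_num)]; field_simp
  rw [neighbourhoodBound, div_pow, hx]
  ring

lemma neighbourhoodBound_le_neighbourhoodBound_crossingPoint {x : ℝ} (h : crossingPoint ≤ x) :
    neighbourhoodBound x ≤ neighbourhoodBound crossingPoint := by
  have ht : 1.2 ≤ crossingPoint / √2 := by
    rw [← add_le_add_iff_left 1, one_add_crossingPoint_div_sqrt_two]; linarith [lt_sqrt_five]
  have hts : crossingPoint / √2 ≤ x / √2 := by gcongr
  rw [neighbourhoodBound_eq, neighbourhoodBound_eq]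
  gcongr 8 * 0.61 * ?_ ^ 2
  · exact div_nonneg (by linarith) (by positivity)
  · exact div_one_add_sq_add_le (by norm_num) (by linarith) hts (by nlinarith)

theorem boundary_min_bound :
    (∀ x : ℝ, 0 < x →
      min (4 * 0.61 * x ^ 2 / (5 + 0.61 * x ^ 2) ^ 2)
          (4 * 0.61 * x ^ 2 / ((1 + x / Real.sqrt 2) ^ 2 + 0.61 * x ^ 2) ^ 2) ≤ 1 / 6.3) ∧
    (4 * 0.61 * (Real.sqrt 2 * (Real.sqrt 5 - 1)) ^ 2 /
        (5 + 0.61 * (Real.sqrt 2 * (Real.sqrt 5 - 1)) ^ 2) ^ 2 =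
      4 * 0.61 * (Real.sqrt 2 * (Real.sqrt 5 - 1)) ^ 2 /
        ((1 + (Real.sqrt 2 * (Real.sqrt 5 - 1)) / Real.sqrt 2) ^ 2 +
          0.61 * (Real.sqrt 2 * (Real.sqrt 5 - 1)) ^ 2) ^ 2) := by
  refine ⟨fun x hx => ?_, sectorBound_crossingPoint_eq_neighbourhoodBound⟩
  change min (sectorBound x) (neighbourhoodBound x) ≤ 1 / 6.3
  rcases le_total x crossingPoint with h | h
  · calc min (sectorBound x) (neighbourhoodBound x) ≤ sectorBound x := min_le_left _ _
      _ ≤ sectorBound crossingPoint := sectorBound_le_sectorBound_crossingPoint hx h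
      _ ≤ 1 / 6.3 := sectorBound_crossingPoint_le
  · calc min (sectorBound x) (neighbourhoodBound x) ≤ neighbourhoodBound x := min_le_right _ _
      _ ≤ neighbourhoodBound crossingPoint :=
        neighbourhoodBound_le_neighbourhoodBound_crossingPoint h
      _ = sectorBound crossingPoint := sectorBound_crossingPoint_eq_neighbourhoodBound.symm
      _ ≤ 1 / 6.3 := sectorBound_crossingPoint_le
end
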